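/- arXiv:1806.05514 — 5 statements merged into one kernel-verified Lean document; each statement's English description precedes it below -/
import Mathlib

section
/- Let D^X, D^Y be N×N real distance matrices with maximum entries m_X, m_Y respectively, and set K̂^X = m_X·J − D^X and K̂^Y = m_Y·J − D^Y. Then the biased sample distance covariance equals the biased sample HSIC computed from the bijective induced kernel matrices: (1/N²)·trace(H·D^X·H·H·D^Y·H) = (1/N²)·trace(H·K̂^X·H·H·K̂^Y·H), where H = I − (1/N)J. -/
/-! Centering annihilates constant matrices, `H * J = 0`, so `H (m J - D) H = -(H D H)`; the two
sign changes cancel in the trace of the product. -/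

namespace Matrix

variable {n : Type*} [Fintype n]

theorem allOnes_mul_allOnes {R : Type*} [NonAssocSemiring R] :
    (of fun _ _ => 1 : Matrix n n R) * of (fun _ _ => 1) = (Fintype.card n : R) • of fun _ _ => 1 := by
  ext i j
  simp [mul_apply]

theorem centering_mul_allOnes [DecidableEq n] {K : Type*} [Field K] [CharZero K] :
    (1 - (Fintype.card n : K)⁻¹ • of fun _ _ => 1 : Matrix n n K) * of (fun _ _ => 1) = 0 := by
  rcases isEmpty_or_nonempty n with hn | hn
  · exact Subsingleton.elim _ _
  · have hcard : (Fintype.card n : K) ≠ 0 := Nat.cast_ne_zero.mpr Fintype.card_ne_zero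
    rw [sub_mul, one_mul, smul_mul, allOnes_mul_allOnes, smul_smul, inv_mul_cancel₀ hcard,
      one_smul, sub_self]

theorem mul_smul_sub_mul_of_mul_eq_zero {R : Type*} [CommRing R] {H J : Matrix n n R}
    (hHJ : H * J = 0) (c : R) (D : Matrix n n R) : H * (c • J - D) * H = -(H * D * H) := by
  rw [mul_sub, Matrix.mul_smul, hHJ, smul_zero, zero_sub, neg_mul]

end Matrix

theorem stmt_11_general (N : ℕ) (DX DY : Matrix (Fin N) (Fin N) ℝ)
    (mX mY : ℝ) :
    let J : Matrix (Fin N) (Fin N) ℝ := Matrix.of fun _ _ => 1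
    let H : Matrix (Fin N) (Fin N) ℝ := 1 - (N : ℝ)⁻¹ • J
    let KX : Matrix (Fin N) (Fin N) ℝ := mX • J - DX
    let KY : Matrix (Fin N) (Fin N) ℝ := mY • J - DY
    ((N : ℝ) ^ 2)⁻¹ * (H * DX * H * (H * DY * H)).trace =
      ((N : ℝ) ^ 2)⁻¹ * (H * KX * H * (H * KY * H)).trace := by
  intro J H KX KY
  have hHJ : H * J = 0 := by
    simpa only [Fintype.card_fin] using Matrix.centering_mul_allOnes (n := Fin N) (K := ℝ)
  rw [Matrix.mul_smul_sub_mul_of_mul_eq_zero hHJ, Matrix.mul_smul_sub_mul_of_mul_eq_zero hHJ,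
    neg_mul, mul_neg, neg_neg]

/-- For `N × N` distance matrices `DX, DY` with maximum entries `mX, mY`
and bijective induced kernel matrices `K̂X = mX·J - DX`, `K̂Y = mY·J - DY`, the biased
sample distance covariance equals the biased sample HSIC:
`(1/N²)·trace(H·DX·H·H·DY·H) = (1/N²)·trace(H·K̂X·H·H·K̂Y·H)`. -/
theorem stmt_11 (N : ℕ) (hN : 0 < N) (DX DY : Matrix (Fin N) (Fin N) ℝ)
    (mX mY : ℝ)
    (hmX : IsGreatest {r : ℝ | ∃ i j : Fin N, DX i j = r} mX)
    (hmY : IsGreatest {r : ℝ | ∃ i j : Fin N, DY i j = r} mY) :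
    let J : Matrix (Fin N) (Fin N) ℝ := Matrix.of fun _ _ => 1
    let H : Matrix (Fin N) (Fin N) ℝ := 1 - (N : ℝ)⁻¹ • J
    let KX : Matrix (Fin N) (Fin N) ℝ := mX • J - DX
    let KY : Matrix (Fin N) (Fin N) ℝ := mY • J - DY
    ((N : ℝ) ^ 2)⁻¹ * (H * DX * H * (H * DY * H)).trace =
      ((N : ℝ) ^ 2)⁻¹ * (H * KX * H * (H * KY * H)).trace :=
  stmt_11_general N DX DY mX mY
end

section
/- Let D^X, D^Y be N×N real distance matrices with maximum entries m_X, m_Y, set K̂^X = m_X·J − D^X, K̂^Y = m_Y·J − D^Y, and let P be any N×N permutation matrix. Then the permuted test statistics agree: trace(H·D^X·H·H·(P·D^Y·Pᵀ)·H) = trace(H·K̂^X·H·H·(P·K̂^Y·Pᵀ)·H). Consequently the permutation-test p-values of the sample distance covariance and of the sample HSIC with the bijective induced kernel are identical. -/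
open Matrix

/-!
The centering matrix annihilates constants (`H J = 0`), and conjugation by a permutation
matrix fixes `J`. Hence `H (m J - D) H = -(H D H)` for the kernel and for its
permuted copy alike, and the two sign changes cancel in the trace.
-/

namespace Matrix

variable {n R : Type*} [Fintype n]

def centering (n R : Type*) [Fintype n] [DecidableEq n] [Field R] : Matrix n n R :=
  1 - (Fintype.card n : R)⁻¹ • of fun _ _ => 1

lemma of_one_mul_of_one [NonAssocSemiring R] :
    (of fun _ _ => 1 : Matrix n n R) * of (fun _ _ => 1) =
      (Fintype.card n : R) • of fun _ _ => 1 := by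
  ext
  simp [mul_apply]

lemma permMatrix_mul_of_one [DecidableEq n] [NonAssocSemiring R] (σ : Equiv.Perm n) :
    σ.permMatrix R * of (fun _ _ => 1) = of fun _ _ => 1 := by
  rw [Equiv.Perm.permMatrix, PEquiv.toMatrix_toPEquiv_mul]
  rfl

lemma of_one_mul_transpose_permMatrix [DecidableEq n] [NonAssocSemiring R]
    (σ : Equiv.Perm n) :
    (of fun _ _ => 1 : Matrix n n R) * (σ.permMatrix R)ᵀ = of fun _ _ => 1 := by
  rw [transpose_permMatrix, Equiv.Perm.permMatrix, PEquiv.mul_toMatrix_toPEquiv]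
  rfl

lemma permMatrix_conj_const_sub [DecidableEq n] [CommRing R] (σ : Equiv.Perm n) (c : R)
    (A : Matrix n n R) :
    σ.permMatrix R * (c • of (fun _ _ => 1) - A) * (σ.permMatrix R)ᵀ =
      c • of (fun _ _ => 1) - σ.permMatrix R * A * (σ.permMatrix R)ᵀ := by
  rw [mul_sub, sub_mul, Matrix.mul_smul, Matrix.smul_mul, permMatrix_mul_of_one,
    of_one_mul_transpose_permMatrix]

section Field

variable [DecidableEq n] [Field R] (hn : (Fintype.card n : R) ≠ 0)
include hn

lemma centering_mul_of_one : centering n R * of (fun _ _ => 1) = 0 := by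
  rw [centering, sub_mul, one_mul, Matrix.smul_mul, of_one_mul_of_one, smul_smul,
    inv_mul_cancel₀ hn, one_smul, sub_self]

lemma centering_mul_const_sub_mul_centering (c : R) (A : Matrix n n R) :
    centering n R * (c • of (fun _ _ => 1) - A) * centering n R =
      -(centering n R * A * centering n R) := by
  rw [mul_sub, sub_mul, Matrix.mul_smul, Matrix.smul_mul, centering_mul_of_one hn,
    zero_mul, smul_zero, zero_sub]

end Field

end Matrix

theorem stmt_13_general (N : ℕ) (hN : 0 < N) (DX DY : Matrix (Fin N) (Fin N) ℝ)
    (mX mY : ℝ)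
    (σ : Equiv.Perm (Fin N)) :
    let J : Matrix (Fin N) (Fin N) ℝ := Matrix.of fun _ _ => 1
    let H : Matrix (Fin N) (Fin N) ℝ := 1 - (N : ℝ)⁻¹ • J
    let KX : Matrix (Fin N) (Fin N) ℝ := mX • J - DX
    let KY : Matrix (Fin N) (Fin N) ℝ := mY • J - DY
    let P : Matrix (Fin N) (Fin N) ℝ := σ.permMatrix ℝ
    (H * DX * H * (H * (P * DY * Pᵀ) * H)).trace =
      (H * KX * H * (H * (P * KY * Pᵀ) * H)).trace := by
  intro J H KX KY P
  have hH : H = centering (Fin N) ℝ := by simp [H, J, centering]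
  have hcard : (Fintype.card (Fin N) : ℝ) ≠ 0 := by simpa using hN.ne'
  rw [permMatrix_conj_const_sub, hH, centering_mul_const_sub_mul_centering hcard,
    centering_mul_const_sub_mul_centering hcard, neg_mul, mul_neg, neg_neg]

/-- For distance matrices `DX, DY` with maximum entries `mX, mY`,
bijective induced kernels `K̂X = mX·J - DX`, `K̂Y = mY·J - DY`, and any permutation
matrix `P` (of a permutation `σ`), the permuted test statistics agree:
`trace(H·DX·H·H·(P·DY·Pᵀ)·H) = trace(H·K̂X·H·H·(P·K̂Y·Pᵀ)·H)`; hence the permutation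
p-values of distance covariance and HSIC with the bijective induced kernel coincide. -/
theorem stmt_13 (N : ℕ) (hN : 0 < N) (DX DY : Matrix (Fin N) (Fin N) ℝ)
    (mX mY : ℝ)
    (hmX : IsGreatest {r : ℝ | ∃ i j : Fin N, DX i j = r} mX)
    (hmY : IsGreatest {r : ℝ | ∃ i j : Fin N, DY i j = r} mY)
    (σ : Equiv.Perm (Fin N)) :
    let J : Matrix (Fin N) (Fin N) ℝ := Matrix.of fun _ _ => 1
    let H : Matrix (Fin N) (Fin N) ℝ := 1 - (N : ℝ)⁻¹ • J
    let KX : Matrix (Fin N) (Fin N) ℝ := mX • J - DX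
    let KY : Matrix (Fin N) (Fin N) ℝ := mY • J - DY
    let P : Matrix (Fin N) (Fin N) ℝ := σ.permMatrix ℝ
    (H * DX * H * (H * (P * DY * Pᵀ) * H)).trace =
      (H * KX * H * (H * (P * KY * Pᵀ) * H)).trace :=
  stmt_13_general N hN DX DY mX mY σ
end

section
/- Let N ≥ 4, let D be an N×N real matrix with maximum entry 1, and let K̂ = J − D be its bijective induced kernel matrix. Let C denote the U-centered matrix of D and Ĉ the U-centered matrix of K̂. Then for all i ≠ j, Ĉ_{ij} = −(C_{ij} + 1/(N−1)), and Ĉ_{ii} = C_{ii} = 0 for all i; equivalently, Ĉ = −(C + (J − I)/(N−1)). -/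
/-! U-centering is linear, so `uCenter (J - D) = uCenter J - uCenter D`, and it kills a constant
matrix `c` only up to `-c / (N - 1)` off the diagonal: there the four terms of the formula sum to
`c (2 - N) / ((N - 1)(N - 2))`. -/

noncomputable def uCenter {N : ℕ} (D : Matrix (Fin N) (Fin N) ℝ) :
    Matrix (Fin N) (Fin N) ℝ :=
  Matrix.of fun i j =>
    if i = j then 0
    else
      D i j - ((N : ℝ) - 2)⁻¹ * ∑ t, D i t - ((N : ℝ) - 2)⁻¹ * ∑ s, D s j +
        (((N : ℝ) - 1) * ((N : ℝ) - 2))⁻¹ * ∑ s, ∑ t, D s t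

section UCenter

variable {N : ℕ}

@[simp]
theorem uCenter_apply_self (D : Matrix (Fin N) (Fin N) ℝ) (i : Fin N) : uCenter D i i = 0 := by
  simp [uCenter]

theorem uCenter_sub (A B : Matrix (Fin N) (Fin N) ℝ) :
    uCenter (A - B) = uCenter A - uCenter B := by
  ext i j
  by_cases hij : i = j
  · simp [hij]
  · simp only [uCenter, Matrix.of_apply, Matrix.sub_apply, if_neg hij, Finset.sum_sub_distrib]
    ring

theorem uCenter_const (hN : N ≠ 2) (c : ℝ) :
    uCenter (Matrix.of fun _ _ : Fin N => c) =
      -(c / ((N : ℝ) - 1)) • (Matrix.of (fun _ _ => 1) - 1) := by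
  ext i j
  by_cases hij : i = j
  · simp [hij]
  · have h3 : (3 : ℝ) ≤ N := by
      have := Fin.val_ne_of_ne hij
      exact_mod_cast (show 3 ≤ N by omega)
    have h1 : (N : ℝ) - 1 ≠ 0 := by linarith
    have h2 : (N : ℝ) - 2 ≠ 0 := by linarith
    simp only [uCenter, Matrix.of_apply, if_neg hij, Finset.sum_const, Finset.card_univ,
      Fintype.card_fin, nsmul_eq_mul, Matrix.smul_apply, Matrix.sub_apply,
      Matrix.one_apply_ne hij, smul_eq_mul]
    field_simp
    ring

end UCenter

theorem stmt_14_general (N : ℕ) (hN : 4 ≤ N) (D : Matrix (Fin N) (Fin N) ℝ) :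
    let J : Matrix (Fin N) (Fin N) ℝ := Matrix.of fun _ _ => 1
    let K : Matrix (Fin N) (Fin N) ℝ := J - D
    let C := uCenter D
    let Chat := uCenter K
    (∀ i j : Fin N, i ≠ j → Chat i j = -(C i j + ((N : ℝ) - 1)⁻¹)) ∧
    (∀ i : Fin N, Chat i i = 0 ∧ C i i = 0) ∧
    Chat = -(C + ((N : ℝ) - 1)⁻¹ • (J - 1)) := by
  intro J K C Chat
  have hChat : Chat = -(C + ((N : ℝ) - 1)⁻¹ • (J - 1)) := by
    simp only [Chat, K, C, uCenter_sub, J, uCenter_const (show N ≠ 2 by omega), one_div,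
      neg_smul, neg_add]
    abel
  refine ⟨fun i j hij => ?_, fun i => ⟨uCenter_apply_self _ i, uCenter_apply_self _ i⟩, hChat⟩
  simp [hChat, J, Matrix.one_apply_ne hij]

/-- For `N ≥ 4`, an `N × N` matrix `D` with maximum entry `1`, and the
bijective induced kernel matrix `K̂ = J - D`, the U-centered matrices satisfy
`Ĉ i j = -(C i j + 1/(N-1))` for `i ≠ j`, `Ĉ i i = C i i = 0`, and equivalently
`Ĉ = -(C + (J - I)/(N-1))`. -/
theorem stmt_14 (N : ℕ) (hN : 4 ≤ N) (D : Matrix (Fin N) (Fin N) ℝ)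
    (hmax : IsGreatest {r : ℝ | ∃ i j : Fin N, D i j = r} 1) :
    let J : Matrix (Fin N) (Fin N) ℝ := Matrix.of fun _ _ => 1
    let K : Matrix (Fin N) (Fin N) ℝ := J - D
    let C := uCenter D
    let Chat := uCenter K
    (∀ i j : Fin N, i ≠ j → Chat i j = -(C i j + ((N : ℝ) - 1)⁻¹)) ∧
    (∀ i : Fin N, Chat i i = 0 ∧ C i i = 0) ∧
    Chat = -(C + ((N : ℝ) - 1)⁻¹ • (J - 1)) :=
  stmt_14_general N hN D
end

section
/- Let C be an N×N real matrix, J the all-ones matrix, I the identity matrix, and P any N×N permutation matrix. Then trace((Pᵀ·C·P)·(J − I)) = trace(C·(J − I)); consequently the remainder term separating the unbiased sample HSIC (with bijective induced kernel) from the unbiased sample distance covariance is invariant under permutation of the sample indices, so the two statistics yield the same permutation-test p-value. -/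
open Matrix

namespace Matrix

variable {n R : Type*} [Fintype n] [DecidableEq n]

lemma permMatrix_mul_transpose [NonAssocSemiring R] (σ : Equiv.Perm n) :
    σ.permMatrix R * (σ.permMatrix R)ᵀ = 1 := by
  rw [transpose_permMatrix, ← permMatrix_mul, inv_mul_cancel, permMatrix_one]

lemma commute_permMatrix_const [NonAssocSemiring R] (σ : Equiv.Perm n) (a : R) :
    Commute (σ.permMatrix R) (of fun _ _ => a) := by
  rw [Commute, SemiconjBy, PEquiv.toMatrix_toPEquiv_mul, PEquiv.mul_toMatrix_toPEquiv]
  rfl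

lemma trace_transpose_mul_mul_mul_of_commute [CommSemiring R] {P C M : Matrix n n R}
    (hP : P * Pᵀ = 1) (hPM : Commute P M) : (Pᵀ * C * P * M).trace = (C * M).trace := by
  calc (Pᵀ * C * P * M).trace = (Pᵀ * (C * M) * P).trace := by
        simp only [Matrix.mul_assoc, hPM.eq]
    _ = (P * Pᵀ * (C * M)).trace := by rw [trace_mul_comm, Matrix.mul_assoc]
    _ = (C * M).trace := by rw [hP, Matrix.one_mul]

end Matrix

/-- For any `N × N` real matrix `C` and any permutation matrix `P`,
`trace((Pᵀ·C·P)·(J - I)) = trace(C·(J - I))`; hence the remainder term separating the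
unbiased sample HSIC with the bijective induced kernel from the unbiased sample
distance covariance is permutation invariant, and the two statistics give the same
permutation-test p-value. -/
theorem stmt_17 (N : ℕ) (C : Matrix (Fin N) (Fin N) ℝ) (σ : Equiv.Perm (Fin N)) :
    let J : Matrix (Fin N) (Fin N) ℝ := Matrix.of fun _ _ => 1
    let P : Matrix (Fin N) (Fin N) ℝ := σ.permMatrix ℝ
    ((Pᵀ * C * P) * (J - 1)).trace = (C * (J - 1)).trace :=
  trace_transpose_mul_mul_mul_of_commute (permMatrix_mul_transpose σ)
    ((commute_permMatrix_const σ 1).sub_right (Commute.one_right _))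
end

section
/- Let (K^X_N)_{N≥1} and (K^Y_N)_{N≥1} be sequences of N×N real kernel matrices (the kernel matrices of growing samples), let a_N, b_N denote the maximum entries of K^X_N and K^Y_N, and define the induced distance matrices D̂^X_N = a_N·J_N − K^X_N and D̂^Y_N = b_N·J_N − K^Y_N. If the sample HSIC sequence Hsic_N = (1/N²)·trace(H_N·K^X_N·H_N·H_N·K^Y_N·H_N) converges to a limit L ∈ ℝ as N → ∞, then the sample distance covariance sequence computed from the induced metrics, Dcov_N = (1/N²)·trace(H_N·D̂^X_N·H_N·H_N·D̂^Y_N·H_N), also converges to L; in particular the population distance covariance with the bijective induced metric is well-defined and equals the population HSIC. -/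
/-!
Centering annihilates constants: `H J = 0`, so replacing a kernel matrix `K` by the induced
distance matrix `c J - K` only flips the sign of the doubly centered matrix `H K H`. The two
sign flips cancel in the trace, so the sample distance covariance equals the sample HSIC for
every `N`.
-/

/-- The `N × N` all-ones matrix. -/
noncomputable def onesMat (N : ℕ) : Matrix (Fin N) (Fin N) ℝ :=
  Matrix.of fun _ _ => 1

/-- The `N × N` centering matrix `H = I - (1/N)·J`. -/
noncomputable def centerMat (N : ℕ) : Matrix (Fin N) (Fin N) ℝ :=
  1 - (N : ℝ)⁻¹ • onesMat N

lemma onesMat_mul_self (N : ℕ) : onesMat N * onesMat N = (N : ℝ) • onesMat N := by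
  ext i j
  simp [onesMat, Matrix.mul_apply]

lemma centerMat_mul_onesMat (N : ℕ) : centerMat N * onesMat N = 0 := by
  rcases N.eq_zero_or_pos with rfl | hN
  · exact Subsingleton.elim _ _
  · rw [centerMat, Matrix.sub_mul, Matrix.one_mul, Matrix.smul_mul, onesMat_mul_self, smul_smul,
      inv_mul_cancel₀ (by positivity), one_smul, sub_self]

lemma centerMat_mul_smul_onesMat_sub_mul_centerMat (N : ℕ) (c : ℝ)
    (K : Matrix (Fin N) (Fin N) ℝ) :
    centerMat N * (c • onesMat N - K) * centerMat N = -(centerMat N * K * centerMat N) := by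
  rw [Matrix.mul_sub, Matrix.mul_smul, centerMat_mul_onesMat, smul_zero, zero_sub,
    Matrix.neg_mul]

theorem stmt_19_general (KX KY : (N : ℕ) → Matrix (Fin N) (Fin N) ℝ) (a b : ℕ → ℝ)
    (L : ℝ)
    (hconv : Filter.Tendsto
      (fun N : ℕ => ((N : ℝ) ^ 2)⁻¹ *
        (centerMat N * KX N * centerMat N *
          (centerMat N * KY N * centerMat N)).trace)
      Filter.atTop (nhds L)) :
    Filter.Tendsto
      (fun N : ℕ => ((N : ℝ) ^ 2)⁻¹ *
        (centerMat N * (a N • onesMat N - KX N) * centerMat N *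
          (centerMat N * (b N • onesMat N - KY N) * centerMat N)).trace)
      Filter.atTop (nhds L) := by
  simpa only [centerMat_mul_smul_onesMat_sub_mul_centerMat, neg_mul_neg] using hconv

/-- Let `KX N, KY N` be sequences of `N × N` kernel matrices with maximum
entries `a N, b N`, and induced distance matrices `D̂X = a N · J - KX N`,
`D̂Y = b N · J - KY N`. If the sample HSIC sequence
`(1/N²)·trace(H·KX·H·H·KY·H)` converges to `L`, then the sample distance covariance
sequence computed from the induced metrics also converges to `L`. -/
theorem stmt_19 (KX KY : (N : ℕ) → Matrix (Fin N) (Fin N) ℝ) (a b : ℕ → ℝ)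
    (ha : ∀ N : ℕ, 0 < N → IsGreatest {r : ℝ | ∃ i j : Fin N, KX N i j = r} (a N))
    (hb : ∀ N : ℕ, 0 < N → IsGreatest {r : ℝ | ∃ i j : Fin N, KY N i j = r} (b N))
    (L : ℝ)
    (hconv : Filter.Tendsto
      (fun N : ℕ => ((N : ℝ) ^ 2)⁻¹ *
        (centerMat N * KX N * centerMat N *
          (centerMat N * KY N * centerMat N)).trace)
      Filter.atTop (nhds L)) :
    Filter.Tendsto
      (fun N : ℕ => ((N : ℝ) ^ 2)⁻¹ *
        (centerMat N * (a N • onesMat N - KX N) * centerMat N *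
          (centerMat N * (b N • onesMat N - KY N) * centerMat N)).trace)
      Filter.atTop (nhds L) :=
  stmt_19_general KX KY a b L hconv
end
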